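/- arXiv:2002.06507 — 7 statements merged into one kernel-verified Lean document; each statement's English description precedes it below -/
import Mathlib

section
/- Consider a stationary-target closed-loop solution (d, φ) with gain condition (c1 − 1)·ω_c > c2. If φ(t0) ∈ [0, π], then φ(t) ∈ [0, π] for all t ≥ t0. (Forward invariance of the interval [0, π] for the relative bearing angle.) -/
open Real Filter Topology

/-- Saturation function: `sat z = z` if `|z| < 1`, `sign z` otherwise. -/
noncomputable def sat (z : ℝ) : ℝ := if |z| < 1 then z else Real.sign z

lemma abs_sat_le_one (z : ℝ) : |sat z| ≤ 1 := by
  unfold sat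
  split_ifs with h
  · exact le_of_lt h
  · rcases Real.sign_apply_eq z with h' | h' | h' <;> simp [h']

/-- Forward invariance of `[0, π]` for the relative bearing angle of the
stationary-target closed-loop system. -/
theorem bearing_interval_forward_invariant
    (t0 v rd c1 c2 ωc : ℝ)
    (hv : 0 < v) (hrd : 0 < rd) (hc1 : 0 < c1) (hc2 : 0 < c2)
    (hωc : ωc = v / rd)
    (d φ : ℝ → ℝ) (hd : Differentiable ℝ d) (hφ : Differentiable ℝ φ)
    (hdpos : ∀ t ≥ t0, 0 < d t)
    (hddot : ∀ t ≥ t0, deriv d t = v * Real.cos (φ t))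
    (hφdot : ∀ t ≥ t0, deriv φ t =
      ωc + c1 * ωc * Real.cos (φ t) + c2 * sat ((d t - rd) / rd)
        - (v / d t) * Real.sin (φ t))
    (hgain : (c1 - 1) * ωc > c2)
    (hinit : φ t0 ∈ Set.Icc 0 π) :
    ∀ t ≥ t0, φ t ∈ Set.Icc 0 π := by
  have hωpos : 0 < ωc := by rw [hωc]; positivity
  intro t1 ht1
  by_contra hout
  rw [Set.mem_Icc, not_and_or, not_le, not_le] at hout
  have hsat : ∀ t, |c2 * sat ((d t - rd) / rd)| ≤ c2 := by
    intro t
    rw [abs_mul, abs_of_pos hc2]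
    calc c2 * |sat ((d t - rd) / rd)| ≤ c2 * 1 :=
          mul_le_mul_of_nonneg_left (abs_sat_le_one _) hc2.le
      _ = c2 := mul_one c2
  rcases hout with hlow | hhigh
  · -- φ t1 < 0 : take last time s with φ s ≥ 0
    set S : Set ℝ := Set.Icc t0 t1 ∩ {t | 0 ≤ φ t} with hS
    have hScomp : IsCompact S :=
      isCompact_Icc.inter_right (isClosed_le continuous_const hφ.continuous)
    have ht0S : t0 ∈ S := ⟨Set.left_mem_Icc.2 ht1, hinit.1⟩
    have hSne : S.Nonempty := ⟨t0, ht0S⟩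
    set s := sSup S with hsdef
    have hsS : s ∈ S := hScomp.sSup_mem hSne
    obtain ⟨⟨hst0, hst1⟩, hφs0⟩ := hsS
    have hslt : s < t1 := lt_of_le_of_ne hst1 (fun h => absurd (h ▸ hφs0) (not_le.2 hlow))
    have hφseq : φ s = 0 := by
      by_contra hne
      have hφspos : 0 < φ s := lt_of_le_of_ne hφs0 (Ne.symm hne)
      have hev : ∀ᶠ t in 𝓝 s, 0 < φ t ∧ t < t1 :=
        ((hφ.continuous.continuousAt.eventually_const_lt hφspos)).and
          (eventually_lt_nhds hslt)
      have hev' : ∀ᶠ t in 𝓝[>] s, 0 < φ t ∧ t < t1 :=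
        nhdsWithin_le_nhds hev
      obtain ⟨t, ⟨hφt, htlt⟩, hts⟩ := (hev'.and self_mem_nhdsWithin).exists
      have : t ∈ S := ⟨⟨hst0.trans hts.le, htlt.le⟩, hφt.le⟩
      exact absurd (le_csSup hScomp.bddAbove this) (not_le.2 hts)
    -- derivative at s is positive
    have hderiv : 0 < deriv φ s := by
      have h := hφdot s hst0
      rw [hφseq, Real.cos_zero, Real.sin_zero] at h
      have hb := (abs_le.1 (hsat s)).1
      rw [h]
      have : c2 < (c1 - 1) * ωc := hgain
      nlinarith
    have hds : HasDerivAt φ (deriv φ s) s := (hφ s).hasDerivAt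
    have hslope := hasDerivAt_iff_tendsto_slope.mp hds
    have hev : ∀ᶠ t in 𝓝[≠] s, 0 < slope φ s t :=
      hslope.eventually_const_lt hderiv
    have hev2 : ∀ᶠ t in 𝓝[>] s, 0 < slope φ s t :=
      nhdsWithin_mono s (fun x hx => ne_of_gt hx) hev
    have hev3 : ∀ᶠ t in 𝓝[>] s, t < t1 :=
      nhdsWithin_le_nhds (eventually_lt_nhds hslt)
    obtain ⟨t, ⟨hpos, htlt⟩, hts⟩ := ((hev2.and hev3).and self_mem_nhdsWithin).exists
    have hφtpos : 0 < φ t := by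
      have : slope φ s t = (φ t - φ s) / (t - s) := by
        rw [slope_def_field]
      rw [this, hφseq, sub_zero] at hpos
      have := mul_pos hpos (sub_pos.2 hts)
      rwa [div_mul_cancel₀ _ (sub_pos.2 hts).ne'] at this
    have : t ∈ S := ⟨⟨hst0.trans hts.le, htlt.le⟩, hφtpos.le⟩
    exact absurd (le_csSup hScomp.bddAbove this) (not_le.2 hts)
  · -- φ t1 > π : take last time s with φ s ≤ π
    set S : Set ℝ := Set.Icc t0 t1 ∩ {t | φ t ≤ π} with hS
    have hScomp : IsCompact S :=
      isCompact_Icc.inter_right (isClosed_le hφ.continuous continuous_const)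
    have ht0S : t0 ∈ S := ⟨Set.left_mem_Icc.2 ht1, hinit.2⟩
    have hSne : S.Nonempty := ⟨t0, ht0S⟩
    set s := sSup S with hsdef
    have hsS : s ∈ S := hScomp.sSup_mem hSne
    obtain ⟨⟨hst0, hst1⟩, hφs0⟩ := hsS
    have hslt : s < t1 := lt_of_le_of_ne hst1 (fun h => absurd (h ▸ hφs0) (not_le.2 hhigh))
    have hφseq : φ s = π := by
      by_contra hne
      have hφslt : φ s < π := lt_of_le_of_ne hφs0 hne
      have hev : ∀ᶠ t in 𝓝 s, φ t < π ∧ t < t1 :=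
        ((hφ.continuous.continuousAt.eventually_lt_const hφslt)).and
          (eventually_lt_nhds hslt)
      have hev' : ∀ᶠ t in 𝓝[>] s, φ t < π ∧ t < t1 :=
        nhdsWithin_le_nhds hev
      obtain ⟨t, ⟨hφt, htlt⟩, hts⟩ := (hev'.and self_mem_nhdsWithin).exists
      have : t ∈ S := ⟨⟨hst0.trans hts.le, htlt.le⟩, hφt.le⟩
      exact absurd (le_csSup hScomp.bddAbove this) (not_le.2 hts)
    have hderiv : deriv φ s < 0 := by
      have h := hφdot s hst0
      rw [hφseq, Real.cos_pi, Real.sin_pi] at h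
      have hb := (abs_le.1 (hsat s)).2
      rw [h]
      have : c2 < (c1 - 1) * ωc := hgain
      nlinarith
    have hds : HasDerivAt φ (deriv φ s) s := (hφ s).hasDerivAt
    have hslope := hasDerivAt_iff_tendsto_slope.mp hds
    have hev : ∀ᶠ t in 𝓝[≠] s, slope φ s t < 0 :=
      hslope.eventually_lt_const hderiv
    have hev2 : ∀ᶠ t in 𝓝[>] s, slope φ s t < 0 :=
      nhdsWithin_mono s (fun x hx => ne_of_gt hx) hev
    have hev3 : ∀ᶠ t in 𝓝[>] s, t < t1 :=
      nhdsWithin_le_nhds (eventually_lt_nhds hslt)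
    obtain ⟨t, ⟨hpos, htlt⟩, hts⟩ := ((hev2.and hev3).and self_mem_nhdsWithin).exists
    have hφtlt : φ t < π := by
      have hsl : slope φ s t = (φ t - φ s) / (t - s) := by
        rw [slope_def_field]
      rw [hsl, hφseq] at hpos
      have := mul_neg_of_neg_of_pos hpos (sub_pos.2 hts)
      rw [div_mul_cancel₀ _ (sub_pos.2 hts).ne'] at this
      linarith
    have : t ∈ S := ⟨⟨hst0.trans hts.le, htlt.le⟩, hφtlt.le⟩
    exact absurd (le_csSup hScomp.bddAbove this) (not_le.2 hts)
end

section
/- Let v > 0, r_d > 0 and c1 > 1 be real numbers. Then for every x1 ≥ r_d and every x2 ∈ (π/2, π]: v·cos(x2)·((1 − sin(x2))/x1 + (c1/r_d)·cos(x2)) > 0. (Strict decrease of the Lyapunov function along the closed-loop flow in the region x1 ≥ r_d, x2 ∈ (π/2, π]: this expression equals the negative of the Lyapunov derivative there.) -/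
open Real

/-- Strict positivity of minus the Lyapunov derivative in the region
`x1 ≥ r_d`, `x2 ∈ (π/2, π]`, given `c1 > 1`. -/
theorem lyapunov_derivative_negative_region
    (v rd c1 : ℝ) (hv : 0 < v) (hrd : 0 < rd) (hc1 : 1 < c1) :
    ∀ x1, rd ≤ x1 → ∀ x2, π / 2 < x2 → x2 ≤ π →
      0 < v * Real.cos x2 * ((1 - Real.sin x2) / x1 + (c1 / rd) * Real.cos x2) := by
  intro x1 hx1 x2 h1 h2
  have hpi := Real.pi_pos
  have hx1pos : 0 < x1 := lt_of_lt_of_le hrd hx1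
  have hcos : Real.cos x2 < 0 :=
    Real.cos_neg_of_pi_div_two_lt_of_lt h1 (by linarith)
  have hcoshalf : 0 ≤ Real.cos (x2 / 2) :=
    Real.cos_nonneg_of_mem_Icc ⟨by linarith, by linarith⟩
  have hhalf : Real.cos (x2 / 2) ≤ Real.sin (x2 / 2) := by
    rw [← Real.cos_pi_div_two_sub (x2 / 2)]
    apply Real.cos_le_cos_of_nonneg_of_le_pi (by linarith) (by linarith) (by linarith)
  have hkey : 1 + Real.cos x2 ≤ Real.sin x2 := by
    have hc : Real.cos x2 = 2 * Real.cos (x2 / 2) ^ 2 - 1 := by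
      rw [← Real.cos_two_mul]; ring_nf
    have hs : Real.sin x2 = 2 * Real.sin (x2 / 2) * Real.cos (x2 / 2) := by
      rw [← Real.sin_two_mul]; ring_nf
    nlinarith [hcoshalf, hhalf]
  have hsle : 1 - Real.sin x2 ≥ 0 := by linarith [Real.sin_le_one x2]
  have hdiv : (1 - Real.sin x2) / x1 ≤ (1 - Real.sin x2) / rd :=
    div_le_div_of_nonneg_left hsle hrd hx1
  have hc1cos : c1 * Real.cos x2 < 1 * Real.cos x2 :=
    mul_lt_mul_of_neg_right hc1 hcos
  have hbr : (1 - Real.sin x2) / x1 + (c1 / rd) * Real.cos x2 < 0 := by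
    have h3 : (1 - Real.sin x2) / rd + (c1 / rd) * Real.cos x2 < 0 := by
      have heq : (1 - Real.sin x2) / rd + (c1 / rd) * Real.cos x2
          = (1 - Real.sin x2 + c1 * Real.cos x2) / rd := by ring
      rw [heq, div_neg_iff]
      right
      constructor
      · nlinarith
      · exact hrd
    calc (1 - Real.sin x2) / x1 + (c1 / rd) * Real.cos x2
        ≤ (1 - Real.sin x2) / rd + (c1 / rd) * Real.cos x2 := by linarith
      _ < 0 := h3
  have := mul_pos_of_neg_of_neg hcos hbr
  calc (0:ℝ) < v * (Real.cos x2 * ((1 - Real.sin x2) / x1 + (c1 / rd) * Real.cos x2)) :=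
        mul_pos hv this
    _ = v * Real.cos x2 * ((1 - Real.sin x2) / x1 + (c1 / rd) * Real.cos x2) := by ring
end

section
/- Let v, r_d, c1, c2 > 0 and ω_c = v/r_d, and define h1(x1, x2) = x1·v·cos(x2) and h2(x1, x2) = x1·(ω_c + c1·ω_c·cos(x2) + c2·sat((x1 − r_d)/r_d)) − v·sin(x2). Then for every x1 ∈ (0, r_d) and every x2 ∈ (−π, 0), the partial derivative of h1 with respect to x1 plus the partial derivative of h2 with respect to x2 exists and equals −c1·ω_c·x1·sin(x2), which is strictly positive. (The Dulac-function computation ruling out closed orbits in the region 0 < x1 < r_d, −π < x2 < 0.) -/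
open Real

/-- Dulac-function computation: with `h1(x1,x2) = x1·v·cos x2` and
`h2(x1,x2) = x1·(ω_c + c1·ω_c·cos x2 + c2·sat((x1−r_d)/r_d)) − v·sin x2`,
the divergence `∂h1/∂x1 + ∂h2/∂x2` exists and equals `−c1·ω_c·x1·sin x2 > 0`
on the region `0 < x1 < r_d`, `−π < x2 < 0`. -/
theorem dulac_no_closed_orbit
    (v rd c1 c2 ωc : ℝ) (hv : 0 < v) (hrd : 0 < rd) (hc1 : 0 < c1) (hc2 : 0 < c2)
    (hωc : ωc = v / rd) :
    ∀ x1 ∈ Set.Ioo (0 : ℝ) rd, ∀ x2 ∈ Set.Ioo (-π) (0 : ℝ),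
      ∃ a b : ℝ,
        HasDerivAt (fun y : ℝ => y * v * Real.cos x2) a x1 ∧
        HasDerivAt (fun y : ℝ =>
          x1 * (ωc + c1 * ωc * Real.cos y + c2 * sat ((x1 - rd) / rd))
            - v * Real.sin y) b x2 ∧
        a + b = -c1 * ωc * x1 * Real.sin x2 ∧
        0 < -c1 * ωc * x1 * Real.sin x2 := by
  intro x1 hx1 x2 hx2
  refine ⟨v * Real.cos x2, x1 * (c1 * ωc * (-Real.sin x2)) - v * Real.cos x2, ?_, ?_, ?_, ?_⟩
  · simpa using (hasDerivAt_id x1).mul_const v |>.mul_const (Real.cos x2)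
  · have h : HasDerivAt (fun y : ℝ =>
        x1 * (ωc + c1 * ωc * Real.cos y + c2 * sat ((x1 - rd) / rd)) - v * Real.sin y)
        (x1 * (0 + c1 * ωc * (-Real.sin x2) + 0) - v * Real.cos x2) x2 := by
      exact (((hasDerivAt_const x2 ωc).add
        ((Real.hasDerivAt_cos x2).const_mul (c1 * ωc))).add
        (hasDerivAt_const x2 (c2 * sat ((x1 - rd) / rd)))).const_mul x1 |>.sub
        ((Real.hasDerivAt_sin x2).const_mul v)
    simpa using h
  · ring
  · have hs : Real.sin x2 < 0 := Real.sin_neg_of_neg_of_neg_pi_lt hx2.2 hx2.1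
    have hωc' : 0 < ωc := by rw [hωc]; positivity
    have hp : 0 < c1 * ωc * x1 := by have := hx1.1; positivity
    nlinarith [mul_pos hp (neg_pos.mpr hs)]
end

section
/- Let v, r_d, c1, c2 > 0, ω_c = v/r_d, Δ = (c1·ω_c)² − 4·(c2·ω_c + ω_c²), and set ρ = (c1·ω_c − √Δ)/2 if Δ > 0 and ρ = c1·ω_c/2 otherwise. Then ρ > 0 and every complex root λ of the quadratic λ² + c1·ω_c·λ + (c2·ω_c + ω_c²) = 0 satisfies Re(λ) ≤ −ρ. Equivalently, every complex eigenvalue of the real 2×2 matrix F = [[0, −v], [(c2 + ω_c)/r_d, −c1·ω_c]] (the Jacobian of the closed-loop system at the equilibrium (r_d, π/2)) has real part at most −ρ; in particular F is Hurwitz. -/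
open Real

/-!
Completing the square, a root `z` of `z² + a z + b` satisfies `(2z + a)² = Δ` with
`Δ = a² - 4b` real, and a complex square root of a real number is either real or purely
imaginary; hence `|2 Re z + a| = √Δ`, where `√Δ = 0` for `Δ ≤ 0`. So both cases of `ρ` are
`(a - √Δ)/2`, which is positive because `b > 0` forces `Δ < a²`. The eigenvalues of `F` are
the roots of its characteristic polynomial `λ² - tr F λ + det F`, which is the given quadratic.
-/

theorem Complex.abs_re_eq_sqrt_of_sq_eq_ofReal {w : ℂ} {d : ℝ} (h : w ^ 2 = d) :
    |w.re| = √d := by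
  have hre : w.re ^ 2 - w.im ^ 2 = d := by
    simpa [sq] using congrArg Complex.re h
  have him : w.re * w.im = 0 := by
    simpa [sq, mul_comm] using congrArg Complex.im h
  rcases mul_eq_zero.mp him with h0 | h0
  · rw [h0, abs_zero, eq_comm, Real.sqrt_eq_zero']
    nlinarith
  · rw [← hre, h0, ← Real.sqrt_sq_eq_abs]
    ring_nf

theorem abs_two_mul_re_add_eq_sqrt_of_root {a b : ℝ} {z : ℂ}
    (hz : z ^ 2 + a * z + b = 0) : |2 * z.re + a| = √(a ^ 2 - 4 * b) := by
  have hsq : (2 * z + a) ^ 2 = ((a ^ 2 - 4 * b : ℝ) : ℂ) := by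
    push_cast
    linear_combination 4 * hz
  simpa using Complex.abs_re_eq_sqrt_of_sq_eq_ofReal hsq

theorem re_le_of_root {a b : ℝ} {z : ℂ} (hz : z ^ 2 + a * z + b = 0) :
    z.re ≤ -((a - √(a ^ 2 - 4 * b)) / 2) := by
  have := (le_abs_self _).trans (abs_two_mul_re_add_eq_sqrt_of_root hz).le
  linarith

theorem sqrt_sq_sub_four_mul_lt {a b : ℝ} (ha : 0 < a) (hb : 0 < b) : √(a ^ 2 - 4 * b) < a :=
  (Real.sqrt_lt' ha).mpr (by linarith)

theorem Matrix.mem_spectrum_fin_two_iff {K : Type*} [Field K] (A : Matrix (Fin 2) (Fin 2) K)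
    (μ : K) : μ ∈ spectrum K A ↔ μ ^ 2 - A.trace * μ + A.det = 0 := by
  simp [Matrix.mem_spectrum_iff_isRoot_charpoly, Matrix.charpoly_fin_two]

/-- The linearization at the equilibrium `(r_d, π/2)` is Hurwitz: every root of the
characteristic polynomial `λ² + c1·ω_c·λ + (c2·ω_c + ω_c²)` — equivalently every
eigenvalue of `F = [[0, −v], [(c2+ω_c)/r_d, −c1·ω_c]]` — has real part at most `−ρ`,
with `ρ > 0` as defined below. -/
theorem linearization_hurwitz
    (v rd c1 c2 ωc Δ ρ : ℝ) (hv : 0 < v) (hrd : 0 < rd) (hc1 : 0 < c1) (hc2 : 0 < c2)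
    (hωc : ωc = v / rd)
    (hΔ : Δ = (c1 * ωc) ^ 2 - 4 * (c2 * ωc + ωc ^ 2))
    (hρ : ρ = if 0 < Δ then (c1 * ωc - Real.sqrt Δ) / 2 else c1 * ωc / 2) :
    0 < ρ ∧
    (∀ z : ℂ, z ^ 2 + (c1 * ωc : ℝ) * z + ((c2 * ωc + ωc ^ 2 : ℝ) : ℂ) = 0 →
      z.re ≤ -ρ) ∧
    (∀ μ ∈ spectrum ℂ
        ((!![0, -v; (c2 + ωc) / rd, -c1 * ωc] : Matrix (Fin 2) (Fin 2) ℝ).map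
          (fun x : ℝ => (x : ℂ))),
      μ.re ≤ -ρ) := by
  have hωc0 : 0 < ωc := hωc ▸ div_pos hv hrd
  have hρ' : ρ = (c1 * ωc - √Δ) / 2 := by
    split_ifs at hρ with hpos
    · exact hρ
    · rw [hρ, Real.sqrt_eq_zero'.mpr (not_lt.mp hpos), sub_zero]
  have roots : ∀ z : ℂ, z ^ 2 + (c1 * ωc : ℝ) * z + ((c2 * ωc + ωc ^ 2 : ℝ) : ℂ) = 0 →
      z.re ≤ -ρ := fun z hz => hρ' ▸ hΔ ▸ re_le_of_root hz
  refine ⟨?_, roots, fun μ hμ => roots μ ?_⟩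
  · rw [hρ', hΔ]
    exact half_pos (sub_pos.mpr (sqrt_sq_sub_four_mul_lt (mul_pos hc1 hωc0) (by positivity)))
  · rw [Matrix.mem_spectrum_fin_two_iff, Matrix.trace_fin_two, Matrix.det_fin_two] at hμ
    have hdet : v * ((c2 + ωc) / rd) = c2 * ωc + ωc ^ 2 := by
      rw [hωc]; field_simp
    simp only [Matrix.map_apply, Matrix.of_apply, Matrix.cons_val', Matrix.cons_val_zero,
      Matrix.cons_val_one, Matrix.empty_val', Matrix.cons_val_fin_one] at hμ
    rw [← hdet]
    push_cast at hμ ⊢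
    linear_combination hμ
end

section
/- For all real numbers k1, k2 and every k4 > 0, the symmetric 3×3 real matrix Ω = (1/2)·[[4k4 + k1², k1·k2, −k1], [k1·k2, 2k4 + k2², −k2], [−k1, −k2, 2]] is positive definite. (Positive definiteness of the Lyapunov matrix used in the analysis of the second-order sliding mode filter.) -/
open Matrix

/-! Twice `Ω` is the positive diagonal matrix `diag(4k₄, 2k₄, 1)` plus the rank-one
positive semidefinite matrix `v vᵀ` with `v = (k₁, k₂, -1)`. -/

theorem Matrix.PosDef.diagonal_add_vecMulVec_self_star {n R : Type*} [Fintype n] [DecidableEq n]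
    [CommRing R] [PartialOrder R] [StarRing R] [StarOrderedRing R] [NoZeroDivisors R]
    {d : n → R} (hd : ∀ i, 0 < d i) (v : n → R) :
    (diagonal d + vecMulVec v (star v)).PosDef :=
  (PosDef.diagonal hd).add_posSemidef (posSemidef_vecMulVec_self_star v)

/-- Positive definiteness of the Lyapunov matrix `Ω` used in the analysis of the
second-order sliding mode filter. -/
theorem omega_pos_def (k1 k2 k4 : ℝ) (hk4 : 0 < k4) :
    (((1 : ℝ) / 2) •
      (!![4 * k4 + k1 ^ 2, k1 * k2, -k1;
          k1 * k2, 2 * k4 + k2 ^ 2, -k2;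
          -k1, -k2, 2] : Matrix (Fin 3) (Fin 3) ℝ)).PosDef := by
  have h_decomp : (!![4 * k4 + k1 ^ 2, k1 * k2, -k1;
      k1 * k2, 2 * k4 + k2 ^ 2, -k2;
      -k1, -k2, 2] : Matrix (Fin 3) (Fin 3) ℝ) =
      diagonal ![4 * k4, 2 * k4, 1] + vecMulVec ![k1, k2, -1] (star ![k1, k2, -1]) := by
    ext i j
    fin_cases i <;> fin_cases j <;> simp <;> ring
  have h_diag : ∀ i, 0 < (![4 * k4, 2 * k4, 1] : Fin 3 → ℝ) i := by
    intro i
    fin_cases i <;> simp <;> positivity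
  rw [h_decomp]
  exact (PosDef.diagonal_add_vecMulVec_self_star h_diag _).smul (by norm_num)
end

section
/- Let γ > 0, t0 ∈ ℝ, and let V : ℝ → ℝ be differentiable on [t0, ∞) with V(t) ≥ 0 and V'(t) ≤ −γ·√(V(t)) for all t ≥ t0. Then V(t) = 0 for all t ≥ t0 + 2·√(V(t0))/γ. (Finite-time convergence via the comparison principle, used to establish exact recovery of the range rate by the SOSM filter.) -/
/-!
Comparison principle: while `V > 0`, the chain rule turns `V' ≤ -γ √V` into `(√V)' ≤ -γ / 2`,
so `√V` reaches `0` no later than time `2 √(V t0) / γ` after `t0`. Since `V' ≤ 0`, `V` is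
antitone and, being nonnegative, stays at `0` from then on.
-/

open Set

theorem sqrt_le_sqrt_sub_of_hasDerivAt_le_neg_mul_sqrt {V V' : ℝ → ℝ} {γ a b : ℝ}
    (hab : a ≤ b) (hcont : ContinuousOn V (Icc a b))
    (hV : ∀ x ∈ Ioo a b, HasDerivAt V (V' x) x) (hpos : ∀ x ∈ Ioo a b, 0 < V x)
    (hder : ∀ x ∈ Ioo a b, V' x ≤ -γ * √(V x)) :
    √(V b) ≤ √(V a) - γ / 2 * (b - a) := by
  have hderiv : ∀ x ∈ Ioo a b, HasDerivAt (fun t => √(V t) + γ / 2 * t)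
      (V' x / (2 * √(V x)) + γ / 2) x := fun x hx =>
    (((hV x hx).sqrt (hpos x hx).ne').add ((hasDerivAt_id x).const_mul (γ / 2))).congr_deriv
      (by rw [mul_one])
  have hnonpos : ∀ x ∈ Ioo a b, V' x / (2 * √(V x)) + γ / 2 ≤ 0 := fun x hx => by
    have hsqrt : 0 < √(V x) := Real.sqrt_pos.mpr (hpos x hx)
    have : V' x / (2 * √(V x)) ≤ -γ / 2 := by
      rw [div_le_iff₀ (by positivity)]
      linarith [hder x hx]
    linarith
  have hanti : AntitoneOn (fun t => √(V t) + γ / 2 * t) (Icc a b) := by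
    refine antitoneOn_of_hasDerivWithinAt_nonpos (convex_Icc a b)
      ((Real.continuous_sqrt.comp_continuousOn hcont).add (by fun_prop))
      (f' := fun x => V' x / (2 * √(V x)) + γ / 2) ?_ ?_ <;> rw [interior_Icc]
    · exact fun x hx => (hderiv x hx).hasDerivWithinAt
    · exact hnonpos
  have hends := hanti (left_mem_Icc.mpr hab) (right_mem_Icc.mpr hab) hab
  simp only at hends
  linarith

/-- Finite-time convergence via the comparison principle: a nonnegative
differentiable function satisfying `V' ≤ −γ·√V` vanishes after time
`t0 + 2·√(V t0)/γ`. -/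
theorem finite_time_convergence
    (γ t0 : ℝ) (hγ : 0 < γ) (V : ℝ → ℝ)
    (hdiff : DifferentiableOn ℝ V (Set.Ici t0))
    (hnn : ∀ t ≥ t0, 0 ≤ V t)
    (hder : ∀ t ≥ t0, derivWithin V (Set.Ici t0) t ≤ -γ * Real.sqrt (V t)) :
    ∀ t ≥ t0 + 2 * Real.sqrt (V t0) / γ, V t = 0 := by
  set T := t0 + 2 * √(V t0) / γ with hT_def
  have hT : t0 ≤ T := le_add_of_nonneg_right (by positivity)
  have hV : ∀ x ∈ Ioi t0, HasDerivAt V (derivWithin V (Ici t0) x) x := fun x hx =>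
    (hdiff x (mem_Ici.mpr hx.out.le)).hasDerivWithinAt.hasDerivAt (Ici_mem_nhds hx)
  have hanti : AntitoneOn V (Ici t0) := by
    refine antitoneOn_of_hasDerivWithinAt_nonpos (convex_Ici t0) hdiff.continuousOn
      (f' := fun x => derivWithin V (Ici t0) x) ?_ ?_ <;> rw [interior_Ici] <;> intro x hx
    · exact (hV x hx).hasDerivWithinAt
    · linarith [hder x hx.out.le, mul_nonneg hγ.le (Real.sqrt_nonneg (V x))]
  have hVT : V T = 0 := by
    by_contra hne
    have hVT_pos : 0 < V T := (hnn T hT).lt_of_ne' hne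
    have hdecay := sqrt_le_sqrt_sub_of_hasDerivAt_le_neg_mul_sqrt hT
      (hdiff.continuousOn.mono Icc_subset_Ici_self) (fun x hx => hV x hx.1)
      (fun x hx => hVT_pos.trans_le (hanti hx.1.le hT hx.2.le))
      (fun x hx => hder x hx.1.le)
    have : γ / 2 * (T - t0) = √(V t0) := by rw [hT_def]; field_simp; ring
    linarith [Real.sqrt_pos.mpr hVT_pos]
  intro t ht
  exact le_antisymm (hVT ▸ hanti hT (hT.trans ht) ht) (hnn t (hT.trans ht))
end

section
/- Let k > 0 and 0 ≤ δ < k, and let e : ℝ → ℝ be differentiable. If there exists T ∈ ℝ such that |e'(t) + k·sat(e(t))| ≤ δ for all t ≥ T, then limsup_{t→∞} |e(t)| ≤ δ/k. (Ultimate-boundedness lemma used in Step 3 of the moving-target analysis to convert the bound on z(t) = e'(t) + (c2/c1)·sat(e(t)) into a bound on the circumnavigation error.) -/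
/-!
While `e t ≥ c` for a level `δ / k < c < 1`, saturation gives `k * sat (e t) ≥ k * c`, so
`e' ≤ δ - k * c < 0`: the function decreases at a uniform rate until it drops below `c`, and once
below it can never cross `c` upwards again. Applying this to `e` and `-e` gives `|e| ≤ c`
eventually, for every such `c`.
-/

open Filter

open Set

theorem min_le_sat (x : ℝ) : min x 1 ≤ sat x := by
  unfold sat
  split_ifs with h
  · exact min_le_left x 1
  · rcases le_or_gt 0 x with hx | hx
    · rw [Real.sign_of_pos (by rw [abs_of_nonneg hx] at h; linarith)]
      exact min_le_right x 1
    · rw [Real.sign_of_neg hx]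
      linarith [min_le_left x 1, neg_abs_le x, abs_of_neg hx]

theorem sat_neg (x : ℝ) : sat (-x) = -sat x := by
  unfold sat
  rw [abs_neg, Real.sign_neg]
  split_ifs <;> rfl

section Barrier

variable {e : ℝ → ℝ} {c : ℝ}

theorem le_of_deriv_neg_at_level (he : Differentiable ℝ e) {t₀ : ℝ} (h₀ : e t₀ ≤ c)
    (hd : ∀ t ≥ t₀, e t = c → deriv e t < 0) : ∀ t ≥ t₀, e t ≤ c := fun _ ht =>
  image_le_of_deriv_right_lt_deriv_boundary (B := fun _ => c) (B' := fun _ => 0)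
    he.continuous.continuousOn (fun x _ => (he x).hasDerivAt.hasDerivWithinAt) h₀
    (fun _ => hasDerivAt_const _ c) (fun x hx => hd x hx.1) ⟨ht, le_rfl⟩

theorem exists_le_of_deriv_le_neg (he : Differentiable ℝ e) {m T : ℝ} (hm : 0 < m)
    (hd : ∀ t ≥ T, c ≤ e t → deriv e t ≤ -m) : ∃ t ≥ T, e t ≤ c := by
  by_contra! habove
  have hslope : ∀ t ≥ T, e t - e T ≤ -m * (t - T) := fun t ht =>
    (convex_Ici T).image_sub_le_mul_sub_of_deriv_le he.continuous.continuousOn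
      he.differentiableOn
      (fun x hx => hd x (interior_subset hx) (habove x (interior_subset hx)).le)
      T self_mem_Ici t ht ht
  set t := T + (e T - c) / m
  have hTt : T ≤ t := le_add_of_nonneg_right (div_nonneg (sub_nonneg.2 (habove T le_rfl).le) hm.le)
  have hdrop : -m * (t - T) = -(e T - c) := by
    simp only [t, add_sub_cancel_left]
    field_simp
  linarith [hslope t hTt, habove t hTt]

theorem eventually_le_of_deriv_le_neg (he : Differentiable ℝ e) {m T : ℝ} (hm : 0 < m)
    (hd : ∀ t ≥ T, c ≤ e t → deriv e t ≤ -m) : ∀ᶠ t in atTop, e t ≤ c := by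
  obtain ⟨t₀, hT, h₀⟩ := exists_le_of_deriv_le_neg he hm hd
  filter_upwards [eventually_ge_atTop t₀] with t ht
  exact le_of_deriv_neg_at_level he h₀
    (fun s hs hsc => (hd s (hT.trans hs) hsc.ge).trans_lt (neg_neg_of_pos hm)) t ht

end Barrier

section Saturated

variable {k δ c T : ℝ} {e : ℝ → ℝ}

theorem eventually_le_of_abs_deriv_add_sat_le (hk : 0 ≤ k) (hc : c < 1) (hkc : δ < k * c)
    (he : Differentiable ℝ e) (hT : ∀ t ≥ T, |deriv e t + k * sat (e t)| ≤ δ) :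
    ∀ᶠ t in atTop, e t ≤ c := by
  refine eventually_le_of_deriv_le_neg (T := T) he (sub_pos.2 hkc) fun t ht hct => ?_
  have hsat : k * c ≤ k * sat (e t) :=
    mul_le_mul_of_nonneg_left ((le_min hct hc.le).trans (min_le_sat _)) hk
  linarith [(abs_le.1 (hT t ht)).2]

theorem eventually_abs_le_of_abs_deriv_add_sat_le (hk : 0 ≤ k) (hc : c < 1) (hkc : δ < k * c)
    (he : Differentiable ℝ e) (hT : ∀ t ≥ T, |deriv e t + k * sat (e t)| ≤ δ) :
    ∀ᶠ t in atTop, |e t| ≤ c := by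
  have hT_neg : ∀ t ≥ T, |deriv (-e) t + k * sat ((-e) t)| ≤ δ := fun t ht => by
    rw [deriv.neg, Pi.neg_apply, sat_neg, ← abs_neg]
    convert hT t ht using 2
    ring
  filter_upwards [eventually_le_of_abs_deriv_add_sat_le hk hc hkc he hT,
    eventually_le_of_abs_deriv_add_sat_le hk hc hkc he.neg hT_neg] with t hpos hneg
  exact abs_le.2 ⟨by linarith [show -e t ≤ c from hneg], hpos⟩

end Saturated

theorem ultimate_boundedness_general
    (k δ : ℝ) (hk : 0 < k) (hδk : δ < k)
    (e : ℝ → ℝ) (he : Differentiable ℝ e)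
    (hbound : ∃ T : ℝ, ∀ t ≥ T, |deriv e t + k * sat (e t)| ≤ δ) :
    Filter.limsup (fun t => |e t|) Filter.atTop ≤ δ / k := by
  obtain ⟨T, hT⟩ := hbound
  refine le_of_forall_gt_imp_ge_of_dense fun a ha => ?_
  obtain ⟨c, hδc, hca⟩ := exists_between (lt_min ha ((div_lt_one hk).2 hδk))
  have hkc : δ < k * c := (div_lt_iff₀' hk).1 hδc
  refine limsup_le_of_le (isCoboundedUnder_le_of_le atTop fun t => abs_nonneg (e t)) ?_
  filter_upwards [eventually_abs_le_of_abs_deriv_add_sat_le hk.le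
    (hca.trans_le (min_le_right a 1)) hkc he hT] with t ht
  exact ht.trans (hca.le.trans (min_le_left a 1))

/-- Ultimate-boundedness lemma: if eventually `|e' + k·sat(e)| ≤ δ` with
`0 ≤ δ < k`, then `limsup |e| ≤ δ/k`. -/
theorem ultimate_boundedness
    (k δ : ℝ) (hk : 0 < k) (hδ0 : 0 ≤ δ) (hδk : δ < k)
    (e : ℝ → ℝ) (he : Differentiable ℝ e)
    (hbound : ∃ T : ℝ, ∀ t ≥ T, |deriv e t + k * sat (e t)| ≤ δ) :
    Filter.limsup (fun t => |e t|) Filter.atTop ≤ δ / k :=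
  ultimate_boundedness_general k δ hk hδk e he hbound
end
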